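/- For a weight φ of a metric space (X,d), the following are equivalent: (1) φ is a Scott weight (for every forward Cauchy net {x_i} with Yoneda limit x, inf_i sup_{j≥i} φ(x_j) ≥ φ(x)); (2) for every forward Cauchy net {x_i} with Yoneda limit x, sup_i inf_{j≥i} φ(x_j) ≥ φ(x); (3) φ : (X,d) → ([0,∞], d_R) is Yoneda continuous. -/

import Mathlib

open ENNReal

universe u

structure GMetric (X : Type u) where
  d : X → X → ℝ≥0∞
  refl : ∀ x, d x x = 0
  triangle : ∀ x y z, d x z ≤ d x y + d y z

variable {X : Type u}

/-- Weight of a generalized metric space. -/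
def IsWeight (m : GMetric X) (φ : X → ℝ≥0∞) : Prop := ∀ x y, φ x ≤ φ y + m.d x y

/-- Coweight of a generalized metric space. -/
def IsCoweight (m : GMetric X) (ψ : X → ℝ≥0∞) : Prop := ∀ x y, ψ y ≤ ψ x + m.d x y

/-- The metric on weights: d̄(φ,ψ) = sup_x (ψ x ⊖ φ x). -/
noncomputable def dbar (φ ψ : X → ℝ≥0∞) : ℝ≥0∞ := ⨆ x, ψ x - φ x

/-- A directed index: nonempty, preordered and directed. -/
def DirIdx {ι : Type*} (le : ι → ι → Prop) : Prop :=
  Nonempty ι ∧ Reflexive le ∧ Transitive le ∧ ∀ i j, ∃ k, le i k ∧ le j k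

/-- Forward Cauchy net. -/
def ForwardCauchy {ι : Type*} (m : GMetric X) (le : ι → ι → Prop) (x : ι → X) : Prop :=
  DirIdx le ∧ (⨅ i, ⨆ j, ⨆ (_ : le i j), ⨆ k, ⨆ (_ : le j k), m.d (x j) (x k)) = 0

/-- Yoneda limit of a net. -/
def YonedaLimit {ι : Type*} (m : GMetric X) (le : ι → ι → Prop) (x : ι → X) (a : X) : Prop :=
  ∀ y, m.d a y = ⨅ i, ⨆ j, ⨆ (_ : le i j), m.d (x j) y

/-- Scott weight. -/
def ScottWeight (m : GMetric X) (φ : X → ℝ≥0∞) : Prop :=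
  IsWeight m φ ∧ ∀ (ι : Type u) (le : ι → ι → Prop) (x : ι → X) (a : X),
    ForwardCauchy m le x → YonedaLimit m le x a →
    φ a ≤ ⨅ i, ⨆ j, ⨆ (_ : le i j), φ (x j)

/-- The Scott approach distance. -/
noncomputable def scottDist (m : GMetric X) (x : X) (A : Set X) : ℝ≥0∞ :=
  ⨆ (φ : X → ℝ≥0∞) (_ : ScottWeight m φ ∧ ∀ a ∈ A, φ a = 0), φ x

/-- Tensor product of a weight and a coweight. -/
noncomputable def tensor (φ ψ : X → ℝ≥0∞) : ℝ≥0∞ := ⨅ x, φ x + ψ x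

/-- Flat weight. -/
def FlatWeight (m : GMetric X) (φ : X → ℝ≥0∞) : Prop :=
  IsWeight m φ ∧ (⨅ x, φ x) = 0 ∧
  ∀ ψ₁ ψ₂, IsCoweight m ψ₁ → IsCoweight m ψ₂ →
    tensor φ (fun x => max (ψ₁ x) (ψ₂ x)) = max (tensor φ ψ₁) (tensor φ ψ₂)

/-- Colimit of a weight. -/
def IsColimit (m : GMetric X) (φ : X → ℝ≥0∞) (a : X) : Prop :=
  ∀ y, dbar φ (fun z => m.d z y) = m.d a y

/-- Compact element. -/
def IsCompactElem (m : GMetric X) (a : X) : Prop :=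
  ∀ (ι : Type u) (le : ι → ι → Prop) (x : ι → X) (b : X),
    ForwardCauchy m le x → YonedaLimit m le x b →
    m.d a b = ⨅ i, ⨆ j, ⨆ (_ : le i j), m.d a (x j)

/-- Approach space axioms. -/
def A1 (δ : X → Set X → ℝ≥0∞) : Prop := ∀ x, δ x {x} = 0
def A2 (δ : X → Set X → ℝ≥0∞) : Prop := ∀ x, δ x (∅ : Set X) = ∞
def A3 (δ : X → Set X → ℝ≥0∞) : Prop := ∀ x A B, δ x (A ∪ B) = min (δ x A) (δ x B)
def A4 (δ : X → Set X → ℝ≥0∞) : Prop := ∀ x A B, δ x A ≤ δ x B + ⨆ b ∈ B, δ b A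

/-- Regular function of an approach space. -/
def IsRegularFn (δ : X → Set X → ℝ≥0∞) (φ : X → ℝ≥0∞) : Prop :=
  ∀ x A, φ x - (⨆ a ∈ A, φ a) ≤ δ x A

/-- The Lawvere metric d_L(a,b) = b ⊖ a on [0,∞]. -/
noncomputable def dL : GMetric ℝ≥0∞ where
  d a b := b - a
  refl x := tsub_self x
  triangle x y z := by
    calc z - x ≤ z - y + (y - x) := tsub_le_tsub_add_tsub
    _ = (y - x) + (z - y) := add_comm _ _

/-- The opposite Lawvere metric d_R(a,b) = a ⊖ b on [0,∞]. -/
noncomputable def dR : GMetric ℝ≥0∞ where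
  d a b := a - b
  refl x := tsub_self x
  triangle _ _ _ := tsub_le_tsub_add_tsub

/-- Order on formal balls. -/
def ballLE (m : GMetric X) (p q : X × ℝ≥0∞) : Prop := q.2 + m.d p.1 q.1 ≤ p.2

/-! For a weight `φ` and a forward Cauchy net `x` with Yoneda limit `a`, the net `φ ∘ x` has
`limsup ≤ liminf`, since `φ (x j) ≤ φ (x k) + d (x j) (x k)` and these distances are eventually
small for `j ≤ k`; and `limsup ≤ φ a + limsup d (x j) a = φ a + d a a = φ a`. So (1) and (2) both
say that `φ ∘ x` converges to `φ a`. Condition (3) says the same, because in `([0,∞], d_R)` the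
Yoneda limit of a net is its limsup: `· - c` is monotone and continuous, so commutes with limsup. -/

section NetLimits

variable {ι : Type*} (le : ι → ι → Prop)

noncomputable def netLimsup (f : ι → ℝ≥0∞) : ℝ≥0∞ := ⨅ i, ⨆ j, ⨆ (_ : le i j), f j

noncomputable def netLiminf (f : ι → ℝ≥0∞) : ℝ≥0∞ := ⨆ i, ⨅ j, ⨅ (_ : le i j), f j

variable {le}

lemma netLiminf_le_netLimsup (hd : DirIdx le) (f : ι → ℝ≥0∞) :
    netLiminf le f ≤ netLimsup le f := by
  refine iSup_le fun i => le_iInf fun i' => ?_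
  obtain ⟨k, hik, hi'k⟩ := hd.2.2.2 i i'
  exact (iInf₂_le k hik).trans (le_iSup₂ (f := fun j _ => f j) k hi'k)

lemma netLimsup_tsub [Nonempty ι] (f : ι → ℝ≥0∞) (c : ℝ≥0∞) :
    netLimsup le (fun j => f j - c) = netLimsup le f - c := by
  rw [netLimsup, netLimsup, Monotone.map_ciInf_of_continuousAt
    (ENNReal.continuous_sub_right c).continuousAt fun _ _ h => tsub_le_tsub_right h c]
  simp only [ENNReal.iSup_sub]

lemma yonedaLimit_dR_iff_eq_netLimsup [Nonempty ι] (f : ι → ℝ≥0∞) (a : ℝ≥0∞) :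
    YonedaLimit dR le f a ↔ a = netLimsup le f := by
  refine ⟨fun h => by simpa [dR, netLimsup] using h 0, fun h c => ?_⟩
  change a - c = netLimsup le (fun j => f j - c)
  rw [netLimsup_tsub, h]

end NetLimits

namespace IsWeight

variable {ι : Type*} {le : ι → ι → Prop} {m : GMetric X} {φ : X → ℝ≥0∞}

lemma netLimsup_le_add (hφ : IsWeight m φ) (x : ι → X) (y : X) :
    netLimsup le (fun j => φ (x j)) ≤ φ y + netLimsup le (fun j => m.d (x j) y) := by
  rw [netLimsup, netLimsup, ENNReal.add_iInf]
  refine iInf_mono fun i => iSup₂_le fun j hij => ?_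
  exact (hφ (x j) y).trans (add_le_add_right (le_iSup₂ (f := fun j _ => m.d (x j) y) j hij) _)

lemma netLimsup_le_of_yonedaLimit (hφ : IsWeight m φ) {x : ι → X} {a : X}
    (hy : YonedaLimit m le x a) : netLimsup le (fun j => φ (x j)) ≤ φ a := by
  have hlim : netLimsup le (fun j => m.d (x j) a) = 0 := (hy a).symm.trans (m.refl a)
  simpa [hlim] using hφ.netLimsup_le_add (le := le) x a

lemma netLimsup_le_netLiminf (hφ : IsWeight m φ) {x : ι → X} (hc : ForwardCauchy m le x) :
    netLimsup le (fun j => φ (x j)) ≤ netLiminf le (fun j => φ (x j)) := by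
  set D : ι → ℝ≥0∞ := fun i => ⨆ j, ⨆ (_ : le i j), ⨆ k, ⨆ (_ : le j k), m.d (x j) (x k)
  have hD : ⨅ i, D i = 0 := hc.2
  calc netLimsup le (fun j => φ (x j)) ≤ ⨅ i, (netLiminf le (fun j => φ (x j)) + D i) := by
        refine iInf_mono fun i => iSup₂_le fun j hij => ?_
        have hφD : φ (x j) ≤ (⨅ k, ⨅ (_ : le j k), φ (x k)) + D i := by
          rw [ENNReal.iInf₂_add]
          refine le_iInf₂ fun k hjk => (hφ (x j) (x k)).trans (add_le_add_right ?_ _)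
          exact (le_iSup₂ (f := fun k _ => m.d (x j) (x k)) k hjk).trans
            (le_iSup₂ (f := fun j _ => ⨆ k, ⨆ (_ : le j k), m.d (x j) (x k)) j hij)
        exact hφD.trans (add_le_add_left (le_iSup (fun j => ⨅ k, ⨅ (_ : le j k), φ (x k)) j) _)
    _ = netLiminf le (fun j => φ (x j)) := by rw [← ENNReal.add_iInf, hD, add_zero]

end IsWeight

/-- Characterizations of Scott weights: liminf condition, limsup condition, and
Yoneda continuity as a map into ([0,∞], d_R). -/
theorem stmt8 (m : GMetric X) (φ : X → ℝ≥0∞) (hφ : IsWeight m φ) :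
    ((∀ (ι : Type u) (le : ι → ι → Prop) (x : ι → X) (a : X),
        ForwardCauchy m le x → YonedaLimit m le x a →
        φ a ≤ ⨅ i, ⨆ j, ⨆ (_ : le i j), φ (x j)) ↔
      (∀ (ι : Type u) (le : ι → ι → Prop) (x : ι → X) (a : X),
        ForwardCauchy m le x → YonedaLimit m le x a →
        φ a ≤ ⨆ i, ⨅ j, ⨅ (_ : le i j), φ (x j))) ∧
    ((∀ (ι : Type u) (le : ι → ι → Prop) (x : ι → X) (a : X),
        ForwardCauchy m le x → YonedaLimit m le x a →
        φ a ≤ ⨅ i, ⨆ j, ⨆ (_ : le i j), φ (x j)) ↔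
      (∀ (ι : Type u) (le : ι → ι → Prop) (x : ι → X) (a : X),
        ForwardCauchy m le x → YonedaLimit m le x a →
        YonedaLimit dR le (fun i => φ (x i)) (φ a))) := by
  refine ⟨⟨fun h ι le x a hc hy => (h ι le x a hc hy).trans (hφ.netLimsup_le_netLiminf hc),
    fun h ι le x a hc hy => (h ι le x a hc hy).trans (netLiminf_le_netLimsup hc.1 _)⟩,
    ⟨fun h ι le x a hc hy => ?_, fun h ι le x a hc hy => ?_⟩⟩
  all_goals have := hc.1.1
  · exact (yonedaLimit_dR_iff_eq_netLimsup _ _).2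
      (le_antisymm (h ι le x a hc hy) (hφ.netLimsup_le_of_yonedaLimit hy))
  · exact ((yonedaLimit_dR_iff_eq_netLimsup _ _).1 (h ι le x a hc hy)).le
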